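/- Let (F₁, F₂) and (G₁, G₂) be the CHFIS pairs, with the same parameters α_{n,m}, β_{n,m}, γ_{n,m}, for generalized interpolation data Δ = {(x_i, y_j, z_{i,j}, t_{i,j})} and Δ* = {(x_i, y_j, z_{i,j}, t*_{i,j})} respectively (same knots and same z-values, perturbed hidden-variable values). Then the self-affine components satisfy sup_{(x,y) ∈ S} |F₂(x,y) − G₂(x,y)| ≤ (4(1+γ)/(1−γ)) · max{ |t_{n,m} − t*_{n,m}| : 0 ≤ n ≤ N, 0 ≤ m ≤ M }, where γ = max_{n,m}|γ_{n,m}|. -/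

import Mathlib

/-!
The difference `H = F₂ - G₂` satisfies `H ∘ (φₙ × ψₘ) = γₙₘ H + (qₙₘ - q*ₙₘ)`, and `qₙₘ - q*ₙₘ`
is the bilinear map `q` built from the data `t - t*`. A bilinear map on a rectangle is bounded
by its values at the corners, which the join-up conditions fix as `(t - t*)(corner of the cell)
- γₙₘ (t - t*)(corner of S)`; so `|qₙₘ - q*ₙₘ| ≤ (1 + γ) D` on `S`. At a point of `S` where `|H|`
is maximal this gives `‖H‖ ≤ γ ‖H‖ + (1 + γ) D`, i.e. `‖H‖ ≤ (1 + γ) D / (1 - γ)`.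
-/

open Real Set

noncomputable section

/-- `z_eva` (resp. `t_eva`) from the paper: `z N M - z N 0 - z 0 M + z 0 0`. -/
def eva (N M : ℕ) (z : ℕ → ℕ → ℝ) : ℝ := z N M - z N 0 - z 0 M + z 0 0

/-- The coefficient `g_{n,m}` determined by the join-up conditions. -/
def gCoef (N M : ℕ) (x y : ℕ → ℝ) (z t : ℕ → ℕ → ℝ) (a b : ℕ → ℕ → ℝ) (n m : ℕ) : ℝ :=
  (z (n-1) (m-1) - z (n-1) m - z n (m-1) + z n m
    - a n m * eva N M z - b n m * eva N M t) / ((x 0 - x N) * (y 0 - y M))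

/-- The coefficient `e_{n,m}`. -/
def eCoef (N M : ℕ) (x y : ℕ → ℝ) (z t : ℕ → ℕ → ℝ) (a b : ℕ → ℕ → ℝ) (n m : ℕ) : ℝ :=
  (z (n-1) (m-1) - z n (m-1) - a n m * (z 0 0 - z N 0) - b n m * (t 0 0 - t N 0)
    - gCoef N M x y z t a b n m * (x 0 - x N) * y 0) / (x 0 - x N)

/-- The coefficient `f_{n,m}`. -/
def fCoef (N M : ℕ) (x y : ℕ → ℝ) (z t : ℕ → ℕ → ℝ) (a b : ℕ → ℕ → ℝ) (n m : ℕ) : ℝ :=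
  (z (n-1) (m-1) - z (n-1) m - a n m * (z 0 0 - z 0 M) - b n m * (t 0 0 - t 0 M)
    - gCoef N M x y z t a b n m * (y 0 - y M) * x 0) / (y 0 - y M)

/-- The coefficient `k_{n,m}`. -/
def kCoef (N M : ℕ) (x y : ℕ → ℝ) (z t : ℕ → ℕ → ℝ) (a b : ℕ → ℕ → ℝ) (n m : ℕ) : ℝ :=
  z n m - eCoef N M x y z t a b n m * x N - fCoef N M x y z t a b n m * y M
    - a n m * z N M - b n m * t N M - gCoef N M x y z t a b n m * x N * y M

/-- `p_{n,m}(X,Y) = e_{n,m} X + f_{n,m} Y + g_{n,m} X Y + k_{n,m}`. -/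
def pMap (N M : ℕ) (x y : ℕ → ℝ) (z t : ℕ → ℕ → ℝ) (a b : ℕ → ℕ → ℝ) (n m : ℕ)
    (X Y : ℝ) : ℝ :=
  eCoef N M x y z t a b n m * X + fCoef N M x y z t a b n m * Y
    + gCoef N M x y z t a b n m * X * Y + kCoef N M x y z t a b n m

/-- `q_{n,m}(X,Y) = ẽ_{n,m} X + f̃_{n,m} Y + g̃_{n,m} X Y + k̃_{n,m}`; it is `p` built from the
data `t` with parameters `γ` and `0`. -/
def qMap (N M : ℕ) (x y : ℕ → ℝ) (t : ℕ → ℕ → ℝ) (c : ℕ → ℕ → ℝ) (n m : ℕ) (X Y : ℝ) : ℝ :=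
  pMap N M x y t t c (fun _ _ => 0) n m X Y

/-- `φ_n` (resp. `ψ_m`): the affine map of `[x₀, x_N]` onto `[x_{n-1}, x_n]`. -/
def phiMap (N : ℕ) (x : ℕ → ℝ) (n : ℕ) (X : ℝ) : ℝ :=
  x (n-1) + (x n - x (n-1)) * (X - x 0) / (x N - x 0)

/-- Validity of generalized interpolation data: `N, M ≥ 1`, strictly increasing knots,
`|α_{n,m}| < 1` and `|β_{n,m}| + |γ_{n,m}| < 1`. -/
structure DataOK (N M : ℕ) (x y : ℕ → ℝ) (a b c : ℕ → ℕ → ℝ) : Prop where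
  hN : 1 ≤ N
  hM : 1 ≤ M
  hx : ∀ i < N, x i < x (i+1)
  hy : ∀ j < M, y j < y (j+1)
  ha : ∀ n m, 1 ≤ n → n ≤ N → 1 ≤ m → m ≤ M → |a n m| < 1
  hbc : ∀ n m, 1 ≤ n → n ≤ N → 1 ≤ m → m ≤ M → |b n m| + |c n m| < 1

/-- `(F₁, F₂)` is the CHFIS pair for the generalized interpolation data. -/
def IsCHFIS (N M : ℕ) (x y : ℕ → ℝ) (z t : ℕ → ℕ → ℝ) (a b c : ℕ → ℕ → ℝ)
    (F₁ F₂ : ℝ → ℝ → ℝ) : Prop :=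
  ContinuousOn (fun P : ℝ × ℝ => F₁ P.1 P.2) (Icc (x 0) (x N) ×ˢ Icc (y 0) (y M)) ∧
  ContinuousOn (fun P : ℝ × ℝ => F₂ P.1 P.2) (Icc (x 0) (x N) ×ˢ Icc (y 0) (y M)) ∧
  (∀ i ≤ N, ∀ j ≤ M, F₁ (x i) (y j) = z i j ∧ F₂ (x i) (y j) = t i j) ∧
  ∀ n m, 1 ≤ n → n ≤ N → 1 ≤ m → m ≤ M →
    ∀ X ∈ Icc (x 0) (x N), ∀ Y ∈ Icc (y 0) (y M),
      F₁ (phiMap N x n X) (phiMap M y m Y)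
        = a n m * F₁ X Y + b n m * F₂ X Y + pMap N M x y z t a b n m X Y ∧
      F₂ (phiMap N x n X) (phiMap M y m Y)
        = c n m * F₂ X Y + qMap N M x y t c n m X Y

/-- The invariance-of-ratio condition between the knots `x, y` and the knots `xs, ys`. -/
def RatioInv (N M : ℕ) (x y xs ys : ℕ → ℝ) : Prop :=
  (∀ n, 1 ≤ n → n ≤ N → (x 0 - x N) / (xs 0 - xs N) = (x (n-1) - x n) / (xs (n-1) - xs n)) ∧
  (∀ m, 1 ≤ m → m ≤ M → (y 0 - y M) / (ys 0 - ys M) = (y (m-1) - y m) / (ys (m-1) - ys m))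

/-- `T : [x₀, x_N] → [xs₀, xs_N]` is the cell-wise affine transfer map, sending
`[x_{n-1}, x_n]` affinely onto `[xs_{n-1}, xs_n]` (one coordinate of `R` resp. `K`). -/
def IsTransfer (N : ℕ) (x xs : ℕ → ℝ) (T : ℝ → ℝ) : Prop :=
  ∀ n, 1 ≤ n → n ≤ N → ∀ X ∈ Icc (x (n-1)) (x n),
    T X = xs (n-1) + (xs n - xs (n-1)) * (X - x (n-1)) / (x n - x (n-1))

/-- `max { |a n m| : 1 ≤ n ≤ N, 1 ≤ m ≤ M }` (as an `sSup`). -/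
def supParam (N M : ℕ) (a : ℕ → ℕ → ℝ) : ℝ :=
  sSup {v : ℝ | ∃ n m, 1 ≤ n ∧ n ≤ N ∧ 1 ≤ m ∧ m ≤ M ∧ v = |a n m|}

/-- `max { (|x_n - xs_n| + |y_m - ys_m|)^δ : 0 ≤ n ≤ N, 0 ≤ m ≤ M }` (as an `sSup`). -/
def supKnotDiff (N M : ℕ) (x xs y ys : ℕ → ℝ) (d : ℝ) : ℝ :=
  sSup {v : ℝ | ∃ n m, n ≤ N ∧ m ≤ M ∧ v = (|x n - xs n| + |y m - ys m|) ^ d}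

/-- `max { |z_{n,m} - zs_{n,m}| : 0 ≤ n ≤ N, 0 ≤ m ≤ M }` (as an `sSup`). -/
def supValDiff (N M : ℕ) (z zs : ℕ → ℕ → ℝ) : ℝ :=
  sSup {v : ℝ | ∃ n m, n ≤ N ∧ m ≤ M ∧ v = |z n m - zs n m|}

/-- `max { |z_{i,j} - z_{k,l}| : 0 ≤ i,j,k,l ≤ N }` (as an `sSup`). -/
def supPairDiff (N : ℕ) (z : ℕ → ℕ → ℝ) : ℝ :=
  sSup {v : ℝ | ∃ i j k l, i ≤ N ∧ j ≤ N ∧ k ≤ N ∧ l ≤ N ∧ v = |z i j - z k l|}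

lemma abs_add_mul_le_of_endpoints {A B u₀ u₁ u C : ℝ} (hu : u ∈ Icc u₀ u₁)
    (h₀ : |A * u₀ + B| ≤ C) (h₁ : |A * u₁ + B| ≤ C) : |A * u + B| ≤ C := by
  obtain ⟨hu₀, hu₁⟩ := hu
  rw [abs_le] at h₀ h₁ ⊢
  rcases le_total 0 A with hA | hA <;> constructor <;> nlinarith

lemma abs_bilinear_le_of_corners {e f g k x₀ x₁ y₀ y₁ X Y C : ℝ}
    (hX : X ∈ Icc x₀ x₁) (hY : Y ∈ Icc y₀ y₁)
    (h₀₀ : |e * x₀ + f * y₀ + g * x₀ * y₀ + k| ≤ C)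
    (h₀₁ : |e * x₀ + f * y₁ + g * x₀ * y₁ + k| ≤ C)
    (h₁₀ : |e * x₁ + f * y₀ + g * x₁ * y₀ + k| ≤ C)
    (h₁₁ : |e * x₁ + f * y₁ + g * x₁ * y₁ + k| ≤ C) :
    |e * X + f * Y + g * X * Y + k| ≤ C := by
  have hside : ∀ U, |e * U + f * y₀ + g * U * y₀ + k| ≤ C →
      |e * U + f * y₁ + g * U * y₁ + k| ≤ C → |(e + g * Y) * U + (f * Y + k)| ≤ C := by
    intro U h₀ h₁
    have := abs_add_mul_le_of_endpoints (A := f + g * U) (B := e * U + k) hY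
      (by convert h₀ using 2; ring) (by convert h₁ using 2; ring)
    convert this using 2; ring
  convert abs_add_mul_le_of_endpoints hX (hside _ h₀₀ h₀₁) (hside _ h₁₀ h₁₁) using 2; ring

section Knots

variable {N : ℕ} {x : ℕ → ℝ}

lemma exists_mem_Icc_knots (hN : 1 ≤ N) {u : ℝ} (hu : u ∈ Icc (x 0) (x N)) :
    ∃ n, 1 ≤ n ∧ n ≤ N ∧ u ∈ Icc (x (n-1)) (x n) := by
  induction N with
  | zero => omega
  | succ N ih =>
    rcases Nat.eq_or_lt_of_le hN with h | h
    · exact ⟨1, le_rfl, by omega, by simpa [← h] using hu⟩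
    · by_cases hle : u ≤ x N
      · obtain ⟨n, h1, h2, h3⟩ := ih (by omega) ⟨hu.1, hle⟩
        exact ⟨n, h1, by omega, h3⟩
      · exact ⟨N + 1, by omega, le_rfl, by simpa using (not_le.mp hle).le, hu.2⟩

lemma strictMonoOn_knots (hx : ∀ i < N, x i < x (i+1)) : StrictMonoOn x (Iic N) :=
  strictMonoOn_Iic_of_lt_succ fun i hi => by simpa using hx i hi

lemma knot_zero_lt_last (hN : 1 ≤ N) (hx : ∀ i < N, x i < x (i+1)) : x 0 < x N :=
  strictMonoOn_knots hx (by simp) (by simp) (by omega)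

lemma exists_phiMap_eq (hN : 1 ≤ N) (hx : ∀ i < N, x i < x (i+1)) {u : ℝ}
    (hu : u ∈ Icc (x 0) (x N)) :
    ∃ n, 1 ≤ n ∧ n ≤ N ∧ ∃ X ∈ Icc (x 0) (x N), phiMap N x n X = u := by
  obtain ⟨n, hn1, hnN, hun⟩ := exists_mem_Icc_knots hN hu
  have hS : x 0 < x N := knot_zero_lt_last hN hx
  have hcell : x (n-1) < x n := strictMonoOn_knots hx (by simp; omega) (by simpa) (by omega)
  set s := (u - x (n-1)) / (x n - x (n-1)) with hs
  have hs₀ : 0 ≤ s := div_nonneg (by linarith [hun.1]) (by linarith)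
  have hs₁ : s ≤ 1 := (div_le_one (by linarith)).2 (by linarith [hun.2])
  refine ⟨n, hn1, hnN, x 0 + s * (x N - x 0), ⟨by nlinarith, by nlinarith⟩, ?_⟩
  have hS' : x N - x 0 ≠ 0 := by linarith
  have hcell' : x n - x (n-1) ≠ 0 := by linarith
  rw [phiMap, hs]
  field_simp
  ring

end Knots

lemma supParam_set_finite (N M : ℕ) (c : ℕ → ℕ → ℝ) :
    {v : ℝ | ∃ n m, 1 ≤ n ∧ n ≤ N ∧ 1 ≤ m ∧ m ≤ M ∧ v = |c n m|}.Finite := by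
  refine (((finite_Iic N).prod (finite_Iic M)).image fun p => |c p.1 p.2|).subset ?_
  rintro v ⟨n, m, -, hn, -, hm, rfl⟩
  exact ⟨(n, m), ⟨hn, hm⟩, rfl⟩

lemma abs_le_supParam {N M n m : ℕ} (c : ℕ → ℕ → ℝ) (hn₁ : 1 ≤ n) (hnN : n ≤ N) (hm₁ : 1 ≤ m)
    (hmM : m ≤ M) : |c n m| ≤ supParam N M c :=
  le_csSup (supParam_set_finite N M c).bddAbove ⟨n, m, hn₁, hnN, hm₁, hmM, rfl⟩

lemma supParam_lt_of_forall_lt {N M : ℕ} {c : ℕ → ℕ → ℝ} {r : ℝ} (hN : 1 ≤ N) (hM : 1 ≤ M)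
    (h : ∀ n m, 1 ≤ n → n ≤ N → 1 ≤ m → m ≤ M → |c n m| < r) : supParam N M c < r := by
  rw [supParam, (supParam_set_finite N M c).csSup_lt_iff ⟨_, 1, 1, le_rfl, hN, le_rfl, hM, rfl⟩]
  rintro v ⟨n, m, hn₁, hnN, hm₁, hmM, rfl⟩
  exact h n m hn₁ hnN hm₁ hmM

lemma abs_sub_le_supValDiff {N M n m : ℕ} (t ts : ℕ → ℕ → ℝ) (hn : n ≤ N) (hm : m ≤ M) :
    |t n m - ts n m| ≤ supValDiff N M t ts := by
  refine le_csSup (Set.Finite.bddAbove ?_) ⟨n, m, hn, hm, rfl⟩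
  refine (((finite_Iic N).prod (finite_Iic M)).image fun p => |t p.1 p.2 - ts p.1 p.2|).subset ?_
  rintro v ⟨n, m, hn, hm, rfl⟩
  exact ⟨(n, m), ⟨hn, hm⟩, rfl⟩

section Coefficients

variable {N M : ℕ} {x y : ℕ → ℝ} (z t : ℕ → ℕ → ℝ) (a b : ℕ → ℕ → ℝ) (n m : ℕ)

lemma pMap_x_zero_y_zero (hx : x 0 - x N ≠ 0) (hy : y 0 - y M ≠ 0) :
    pMap N M x y z t a b n m (x 0) (y 0) = z (n-1) (m-1) - a n m * z 0 0 - b n m * t 0 0 := by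
  unfold pMap kCoef eCoef fCoef gCoef eva
  field_simp
  ring

lemma pMap_x_zero_y_last (hx : x 0 - x N ≠ 0) (hy : y 0 - y M ≠ 0) :
    pMap N M x y z t a b n m (x 0) (y M) = z (n-1) m - a n m * z 0 M - b n m * t 0 M := by
  unfold pMap kCoef eCoef fCoef gCoef eva
  field_simp
  ring

lemma pMap_x_last_y_zero (hx : x 0 - x N ≠ 0) (hy : y 0 - y M ≠ 0) :
    pMap N M x y z t a b n m (x N) (y 0) = z n (m-1) - a n m * z N 0 - b n m * t N 0 := by
  unfold pMap kCoef eCoef fCoef gCoef eva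
  field_simp
  ring

lemma pMap_x_last_y_last (hx : x 0 - x N ≠ 0) (hy : y 0 - y M ≠ 0) :
    pMap N M x y z t a b n m (x N) (y M) = z n m - a n m * z N M - b n m * t N M := by
  unfold pMap kCoef eCoef fCoef gCoef eva
  field_simp
  ring

lemma qMap_sub (t ts c : ℕ → ℕ → ℝ) (X Y : ℝ) :
    qMap N M x y t c n m X Y - qMap N M x y ts c n m X Y = qMap N M x y (t - ts) c n m X Y := by
  simp only [qMap, pMap, kCoef, eCoef, fCoef, gCoef, eva, Pi.sub_apply]
  ring

end Coefficients

lemma abs_pMap_le_of_corners {N M : ℕ} {x y : ℕ → ℝ} {z t a b : ℕ → ℕ → ℝ} {n m : ℕ}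
    {X Y C : ℝ} (hX : X ∈ Icc (x 0) (x N)) (hY : Y ∈ Icc (y 0) (y M))
    (h₀₀ : |pMap N M x y z t a b n m (x 0) (y 0)| ≤ C)
    (h₀₁ : |pMap N M x y z t a b n m (x 0) (y M)| ≤ C)
    (h₁₀ : |pMap N M x y z t a b n m (x N) (y 0)| ≤ C)
    (h₁₁ : |pMap N M x y z t a b n m (x N) (y M)| ≤ C) :
    |pMap N M x y z t a b n m X Y| ≤ C :=
  abs_bilinear_le_of_corners hX hY h₀₀ h₀₁ h₁₀ h₁₁

lemma abs_qMap_le {N M : ℕ} {x y : ℕ → ℝ} {u c : ℕ → ℕ → ℝ} {D : ℝ} {n m : ℕ}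
    (hx : x 0 < x N) (hy : y 0 < y M) (hn : n ≤ N) (hm : m ≤ M)
    (hu : ∀ i ≤ N, ∀ j ≤ M, |u i j| ≤ D) {X Y : ℝ} (hX : X ∈ Icc (x 0) (x N))
    (hY : Y ∈ Icc (y 0) (y M)) :
    |qMap N M x y u c n m X Y| ≤ (1 + |c n m|) * D := by
  have hx' : x 0 - x N ≠ 0 := by linarith
  have hy' : y 0 - y M ≠ 0 := by linarith
  have hcorner : ∀ i ≤ N, ∀ j ≤ M, ∀ k ≤ N, ∀ l ≤ M,
      |u i j - c n m * u k l - 0 * u k l| ≤ (1 + |c n m|) * D := by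
    intro i hi j hj k hk l hl
    calc |u i j - c n m * u k l - 0 * u k l| ≤ |u i j| + |c n m| * |u k l| := by
          rw [zero_mul, sub_zero, ← abs_mul]; exact abs_sub _ _
      _ ≤ D + |c n m| * D := by gcongr <;> apply hu <;> assumption
      _ = (1 + |c n m|) * D := by ring
  refine abs_pMap_le_of_corners hX hY ?_ ?_ ?_ ?_ <;>
    simp only [pMap_x_zero_y_zero _ _ _ _ _ _ hx' hy', pMap_x_zero_y_last _ _ _ _ _ _ hx' hy',
      pMap_x_last_y_zero _ _ _ _ _ _ hx' hy', pMap_x_last_y_last _ _ _ _ _ _ hx' hy'] <;>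
    exact hcorner _ (by omega) _ (by omega) _ (by omega) _ (by omega)

lemma IsCHFIS.exists_abs_sub_le {N M : ℕ} {x y : ℕ → ℝ} {z t ts a b c : ℕ → ℕ → ℝ}
    {F₁ F₂ G₁ G₂ : ℝ → ℝ → ℝ} (hD : DataOK N M x y a b c)
    (hF : IsCHFIS N M x y z t a b c F₁ F₂) (hG : IsCHFIS N M x y z ts a b c G₁ G₂)
    {P : ℝ × ℝ} (hP : P ∈ Icc (x 0) (x N) ×ˢ Icc (y 0) (y M)) :
    ∃ Q ∈ Icc (x 0) (x N) ×ˢ Icc (y 0) (y M),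
      |F₂ P.1 P.2 - G₂ P.1 P.2| ≤ supParam N M c * |F₂ Q.1 Q.2 - G₂ Q.1 Q.2|
        + (1 + supParam N M c) * supValDiff N M t ts := by
  obtain ⟨P₁, P₂⟩ := P
  obtain ⟨n, hn₁, hnN, X, hX, rfl⟩ := exists_phiMap_eq hD.hN hD.hx hP.1
  obtain ⟨m, hm₁, hmM, Y, hY, rfl⟩ := exists_phiMap_eq hD.hM hD.hy hP.2
  refine ⟨(X, Y), ⟨hX, hY⟩, ?_⟩
  have hdiff : ∀ i ≤ N, ∀ j ≤ M, |(t - ts) i j| ≤ supValDiff N M t ts :=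
    fun i hi j hj => abs_sub_le_supValDiff t ts hi hj
  have hq := abs_qMap_le (c := c) (knot_zero_lt_last hD.hN hD.hx) (knot_zero_lt_last hD.hM hD.hy)
    hnN hmM hdiff hX hY
  have hc := abs_le_supParam c hn₁ hnN hm₁ hmM
  have hD₀ : 0 ≤ supValDiff N M t ts := (abs_nonneg _).trans (hdiff 0 (Nat.zero_le _) 0 (Nat.zero_le _))
  rw [(hF.2.2.2 n m hn₁ hnN hm₁ hmM X hX Y hY).2, (hG.2.2.2 n m hn₁ hnN hm₁ hmM X hX Y hY).2]
  calc |c n m * F₂ X Y + qMap N M x y t c n m X Y - (c n m * G₂ X Y + qMap N M x y ts c n m X Y)|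
      = |c n m * (F₂ X Y - G₂ X Y) + qMap N M x y (t - ts) c n m X Y| := by
        rw [← qMap_sub]; ring_nf
    _ ≤ |c n m| * |F₂ X Y - G₂ X Y| + (1 + |c n m|) * supValDiff N M t ts := by
        rw [← abs_mul]; exact (abs_add_le _ _).trans (by linarith)
    _ ≤ supParam N M c * |F₂ X Y - G₂ X Y| + (1 + supParam N M c) * supValDiff N M t ts := by
        gcongr

lemma IsCompact.le_div_one_sub_of_forall_exists_le {α : Type*} [TopologicalSpace α] {S : Set α}
    {f : α → ℝ} {γ K : ℝ} (hS : IsCompact S) (hf : ContinuousOn f S) (hγ₀ : 0 ≤ γ) (hγ₁ : γ < 1)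
    (h : ∀ P ∈ S, ∃ Q ∈ S, f P ≤ γ * f Q + K) {P : α} (hP : P ∈ S) : f P ≤ K / (1 - γ) := by
  obtain ⟨P₀, hP₀, hmax⟩ := hS.exists_isMaxOn ⟨P, hP⟩ hf
  obtain ⟨Q, hQ, hP₀Q⟩ := h P₀ hP₀
  have hPP₀ : f P ≤ f P₀ := hmax hP
  have hQP₀ : f Q ≤ f P₀ := hmax hQ
  rw [le_div_iff₀ (by linarith)]
  nlinarith [mul_le_mul_of_nonneg_left hQP₀ hγ₀]

/-- stability of the self-affine component `F₂` with respect to perturbation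
of the hidden variable `t`. -/
theorem chfis_stability_hidden_F2 (N M : ℕ) (x y : ℕ → ℝ) (z t ts : ℕ → ℕ → ℝ)
    (a b c : ℕ → ℕ → ℝ)
    (hD : DataOK N M x y a b c)
    (F₁ F₂ G₁ G₂ : ℝ → ℝ → ℝ)
    (hF : IsCHFIS N M x y z t a b c F₁ F₂)
    (hG : IsCHFIS N M x y z ts a b c G₁ G₂) :
    ∀ X ∈ Icc (x 0) (x N), ∀ Y ∈ Icc (y 0) (y M),
      |F₂ X Y - G₂ X Y| ≤
        4 * (1 + supParam N M c) / (1 - supParam N M c) * supValDiff N M t ts := by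
  intro X hX Y hY
  set γ := supParam N M c
  set D := supValDiff N M t ts
  have hγ₀ : 0 ≤ γ := (abs_nonneg _).trans (abs_le_supParam c le_rfl hD.hN le_rfl hD.hM)
  have hγ₁ : γ < 1 := supParam_lt_of_forall_lt hD.hN hD.hM fun n m hn₁ hnN hm₁ hmM =>
    (le_add_of_nonneg_left (abs_nonneg _)).trans_lt (hD.hbc n m hn₁ hnN hm₁ hmM)
  have hD₀ : 0 ≤ D := (abs_nonneg _).trans (abs_sub_le_supValDiff t ts (Nat.zero_le N) (Nat.zero_le M))
  have hbound : |F₂ X Y - G₂ X Y| ≤ (1 + γ) * D / (1 - γ) :=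
    (isCompact_Icc.prod isCompact_Icc).le_div_one_sub_of_forall_exists_le
      (f := fun P : ℝ × ℝ => |F₂ P.1 P.2 - G₂ P.1 P.2|) (hF.2.1.sub hG.2.1).abs hγ₀ hγ₁
      (fun _ hP => hF.exists_abs_sub_le hD hG hP) (P := (X, Y)) ⟨hX, hY⟩
  have hratio : 0 ≤ (1 + γ) * D / (1 - γ) := div_nonneg (by positivity) (by linarith)
  calc |F₂ X Y - G₂ X Y| ≤ (1 + γ) * D / (1 - γ) := hbound
    _ ≤ 4 * ((1 + γ) * D / (1 - γ)) := by linarith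
    _ = 4 * (1 + γ) / (1 - γ) * D := by ring

end
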